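/- Let ⟨I, S⟩ be an X3C instance with |I| = 3η items, μ ≥ η sets, each item contained in at most 3 sets, let M be a positive integer, and let the unweighted graph G with its clustering and vertices s = u_1^0 and t = u_μ^3 be the associated CluSP instance. If there exists a clustered s–t path in G with fewer than M edges, then ⟨I, S⟩ admits an exact cover. -/

import Mathlib

open SimpleGraph

/-- Vertices of the CluSP hardness graph associated with an X3C instance:
`u j t` (t = 0,1,2,3) for each set `S j`; `item i` is the vertex `v_i`;
`ipath i j t` are the vertices of the length-`M` path attached to `v_i`
corresponding to the set `S j` containing item `i` (its last vertex, with
`t = M - 1`, is the vertex `v_i^h`); `y z` and `ypath z j t` similarly form the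
`y`-gadgets (the last path vertex is `y_z^j`). -/
inductive XVtx (η μ M : ℕ) where
  | u : Fin μ → Fin 4 → XVtx η μ M
  | item : Fin (3 * η) → XVtx η μ M
  | ipath : Fin (3 * η) → Fin μ → Fin M → XVtx η μ M
  | y : Fin (μ - η) → XVtx η μ M
  | ypath : Fin (μ - η) → Fin μ → Fin M → XVtx η μ M
  deriving DecidableEq

/-- The rank (0, 1 or 2) of item `i` within the 3-element set `S j`. -/
def rankIn {η μ : ℕ} (S : Fin μ → Finset (Fin (3 * η))) (i : Fin (3 * η)) (j : Fin μ) : ℕ :=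
  ((S j).filter (· < i)).card

/-- Base adjacency relation of the X3C reduction graph. -/
def xRel {η μ M : ℕ} (S : Fin μ → Finset (Fin (3 * η))) :
    XVtx η μ M → XVtx η μ M → Prop
  | .u j t, .u j' t' => (t : ℕ) = 3 ∧ (t' : ℕ) = 0 ∧ (j : ℕ) + 1 = (j' : ℕ)
  | .u j t, .ipath i j' t' => j = j' ∧ i ∈ S j ∧ (t' : ℕ) = M - 1 ∧
      ((t : ℕ) = rankIn S i j ∨ (t : ℕ) = rankIn S i j + 1)
  | .item i, .ipath i' j t => i = i' ∧ i ∈ S j ∧ (t : ℕ) = 0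
  | .ipath i j t, .ipath i' j' t' => i = i' ∧ j = j' ∧ i ∈ S j ∧ (t' : ℕ) = (t : ℕ) + 1
  | .y z, .ypath z' _ t => z = z' ∧ (t : ℕ) = 0
  | .ypath z j t, .ypath z' j' t' => z = z' ∧ j = j' ∧ (t' : ℕ) = (t : ℕ) + 1
  | .u j t, .ypath _ j' t' => j = j' ∧ (t' : ℕ) = M - 1 ∧ ((t : ℕ) = 0 ∨ (t : ℕ) = 3)
  | _, _ => False

def xGraph {η μ M : ℕ} (S : Fin μ → Finset (Fin (3 * η))) : SimpleGraph (XVtx η μ M) :=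
  SimpleGraph.fromRel (xRel S)

/-- The clusters: for each item `i`, the vertex `v_i` together with all vertices of
the attached paths; for each `z`, the vertex `y_z` together with all vertices of its
attached paths; all remaining vertices lie in singleton clusters. -/
def xClusters (η μ M : ℕ) (S : Fin μ → Finset (Fin (3 * η))) : Set (Set (XVtx η μ M)) :=
  {Cl | (∃ i, Cl = {x | x = XVtx.item i ∨ ∃ j t, i ∈ S j ∧ x = XVtx.ipath i j t}) ∨
        (∃ z, Cl = {x | x = XVtx.y z ∨ ∃ j t, x = XVtx.ypath z j t}) ∨
        (∃ v, Cl = {v})}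

/-- The elements of `Cl` occurring in the list `l` occur consecutively. -/
def ConsecutiveIn {α : Type*} (Cl : Set α) (l : List α) : Prop :=
  ∃ l₁ l₂ l₃ : List α, l = l₁ ++ l₂ ++ l₃ ∧ (∀ x ∈ l₂, x ∈ Cl) ∧
    (∀ x ∈ l₁, x ∉ Cl) ∧ (∀ x ∈ l₃, x ∉ Cl)

/-- The X3C instance admits an exact cover: a subcollection of `η` of the sets
covering each item exactly once. -/
def HasExactCover {η μ : ℕ} (S : Fin μ → Finset (Fin (3 * η))) : Prop :=
  ∃ E : Finset (Fin μ), E.card = η ∧ ∀ i : Fin (3 * η), ∃! j, j ∈ E ∧ i ∈ S j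

/-!
Along a path with fewer than `M` edges every vertex is at distance less than `M` from the
`u`-vertices, so the path never reaches the centre `v_i` or `y_z` of a cluster. A visit to such a
cluster therefore enters and leaves through tips and stays on one leg of the cluster; as the
vertices of a cluster are visited consecutively, the whole cluster is met in a single tip. In
particular each item is visited in at most one of its sets, and each `y_z` in at most one block.
If the path avoids all bottom paths of `S_j`, it has to run through the top path of `S_j` and so
visit the tips of all three items of `S_j` there. The sets whose bottom paths are avoided are
therefore pairwise disjoint, and at most `μ - η` sets are not of this kind, one for each `z`;
hence at least `η` pairwise disjoint sets of size 3 lie among `3η` items: an exact cover.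
-/

theorem ConsecutiveIn.getElem_mem {α : Type*} {Cl : Set α} {l : List α} (h : ConsecutiveIn Cl l)
    {a b c : ℕ} (hab : a ≤ b) (hbc : b ≤ c) (hc : c < l.length) (ha : l[a] ∈ Cl)
    (hc' : l[c] ∈ Cl) : l[b] ∈ Cl := by
  obtain ⟨l₁, l₂, l₃, rfl, h₂, h₁, h₃⟩ := h
  simp only [List.append_assoc, List.getElem_append] at ha hc' ⊢
  grind [List.getElem_mem, List.length_append]

theorem ConsecutiveIn.getVert_mem {V : Type*} {G : SimpleGraph V} {u v : V} {p : G.Walk u v}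
    {Cl : Set V} (h : ConsecutiveIn Cl p.support) {a b c : ℕ} (hab : a ≤ b) (hbc : b ≤ c)
    (hc : c ≤ p.length) (ha : p.getVert a ∈ Cl) (hc' : p.getVert c ∈ Cl) : p.getVert b ∈ Cl := by
  rw [p.getVert_eq_support_getElem (by omega)] at ha hc' ⊢
  exact h.getElem_mem hab hbc _ ha hc'

theorem SimpleGraph.Walk.apply_getVert_le {V : Type*} {G : SimpleGraph V} {u v : V}
    (p : G.Walk u v) (f : V → ℕ) (hf : ∀ ⦃x y⦄, G.Adj x y → f y ≤ f x + 1) {k : ℕ}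
    (hk : k ≤ p.length) : f (p.getVert k) ≤ f u + k := by
  induction k with
  | zero => simp
  | succ k ih =>
    have := hf (p.adj_getVert_succ (by omega : k < p.length))
    have := ih (by omega)
    omega

theorem exists_apply_lt_le_apply_succ {α : Type*} [LinearOrder α] {f : ℕ → α} {v : α} {n : ℕ}
    (h₀ : f 0 < v) (hn : v ≤ f n) : ∃ k < n, f k < v ∧ v ≤ f (k + 1) := by
  induction n with
  | zero => exact absurd hn (not_le.mpr h₀)
  | succ n ih =>
    by_cases h : v ≤ f n
    · obtain ⟨k, hk, hfk⟩ := ih h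
      exact ⟨k, Nat.lt_succ_of_lt hk, hfk⟩
    · exact ⟨n, Nat.lt_succ_self n, not_le.mp h, hn⟩

theorem Finset.card_le_of_forall_exists {α β : Type*} [Fintype β] {W : β → α → Prop}
    {s : Finset α} (hs : ∀ a ∈ s, ∃ z, W z a) (hW : ∀ z a a', W z a → W z a' → a = a') :
    s.card ≤ Fintype.card β :=
  calc s.card = Fintype.card s := (Fintype.card_coe s).symm
    _ ≤ Fintype.card β := Fintype.card_le_of_injective (fun a ↦ (hs a a.2).choose)
        fun a a' h ↦ Subtype.ext (hW _ _ _ (hs a a.2).choose_spec (by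
          dsimp only at h
          exact h ▸ (hs a' a'.2).choose_spec))

section ExactCover

variable {η μ : ℕ} {S : Fin μ → Finset (Fin (3 * η))}

theorem rankIn_lt_card {i : Fin (3 * η)} {j : Fin μ} (hi : i ∈ S j) : rankIn S i j < (S j).card :=
  Finset.card_lt_card (Finset.filter_ssubset.mpr ⟨i, hi, lt_irrefl i⟩)

theorem rankIn_lt_rankIn {i i' : Fin (3 * η)} {j : Fin μ} (hi : i ∈ S j) (hii' : i < i') :
    rankIn S i j < rankIn S i' j := by
  refine Finset.card_lt_card ⟨Finset.monotone_filter_right _ fun _ _ h ↦ h.trans hii', ?_⟩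
  exact fun h ↦ lt_irrefl i (Finset.mem_filter.mp (h (Finset.mem_filter.mpr ⟨hi, hii'⟩))).2

theorem eq_of_rankIn_eq {i i' : Fin (3 * η)} {j : Fin μ} (hi : i ∈ S j) (hi' : i' ∈ S j)
    (h : rankIn S i j = rankIn S i' j) : i = i' := by
  rcases lt_trichotomy i i' with hlt | heq | hlt
  · exact absurd h (rankIn_lt_rankIn hi hlt).ne
  · exact heq
  · exact absurd h (rankIn_lt_rankIn hi' hlt).ne'

theorem hasExactCover_of_pairwiseDisjoint (hcard : ∀ j, (S j).card = 3) {E : Finset (Fin μ)}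
    (hE : η ≤ E.card) (hdisj : (E : Set (Fin μ)).PairwiseDisjoint S) : HasExactCover S := by
  classical
  have hU : (E.biUnion S).card = 3 * E.card := by
    rw [Finset.card_biUnion hdisj, Finset.sum_const_nat fun j _ ↦ hcard j, mul_comm]
  have hle : (E.biUnion S).card ≤ 3 * η := by simpa using Finset.card_le_univ (E.biUnion S)
  have hEη : E.card = η := by omega
  have huniv : E.biUnion S = Finset.univ := Finset.eq_univ_of_card _ (by simp [hU, hEη])
  refine ⟨E, hEη, fun i ↦ ?_⟩
  obtain ⟨j, hj, hij⟩ := Finset.mem_biUnion.mp (huniv ▸ Finset.mem_univ i)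
  exact ⟨j, ⟨hj, hij⟩, fun j' ⟨hj', hij'⟩ ↦ hdisj.elim_finset hj' hj i hij' hij⟩

theorem hasExactCover_of_visits (hημ : η ≤ μ) (hcard : ∀ j, (S j).card = 3)
    (V : Fin (3 * η) → Fin μ → Prop) (W : Fin (μ - η) → Fin μ → Prop)
    (hV : ∀ i j j', i ∈ S j → i ∈ S j' → V i j → V i j' → j = j')
    (hW : ∀ z j j', W z j → W z j' → j = j')
    (hcov : ∀ j, (¬∃ z, W z j) → ∀ i ∈ S j, V i j) : HasExactCover S := by
  classical
  have hbad : (Finset.univ.filter fun j ↦ ∃ z, W z j).card ≤ μ - η := by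
    simpa using Finset.card_le_of_forall_exists (fun j hj ↦ (Finset.mem_filter.mp hj).2) hW
  have hE : η ≤ (Finset.univ.filter fun j ↦ ¬∃ z, W z j).card := by
    have := Finset.card_filter_add_card_filter_not (s := Finset.univ) fun j ↦ ∃ z, W z j
    simp only [Finset.card_univ, Fintype.card_fin] at this
    omega
  refine hasExactCover_of_pairwiseDisjoint hcard hE fun j hj j' hj' hne ↦
    Finset.disjoint_left.mpr fun i hi hi' ↦ hne ?_
  simp only [Finset.coe_filter, Finset.mem_univ, true_and, Set.mem_ofPred_eq] at hj hj'
  exact hV i j j' hi hi' (hcov j hj i hi) (hcov j' hj' i hi')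

end ExactCover

namespace XVtx

variable {η μ M : ℕ}

-- the distance to the `u`-vertices
def depth : XVtx η μ M → ℕ
  | u _ _ => 0
  | item _ => M
  | ipath _ _ t => M - 1 - t
  | y _ => M
  | ypath _ _ t => M - 1 - t

def block : XVtx η μ M → ℕ
  | ipath _ j _ => j
  | ypath _ j _ => j
  | _ => 0

/- Running through the top paths from left to right, `u j t` sits at `7j + 2t` and the tip of
the item of rank `r` in `S j` between `u j r` and `u j (r + 1)`; a bottom path of `S j` jumps
inside the window `[7j, 7j + 6]`. The centres, which a short path never reaches, get `0`. -/
def position (S : Fin μ → Finset (Fin (3 * η))) : XVtx η μ M → ℕ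
  | u j t => 7 * j + 2 * t
  | ipath i j _ => 7 * j + 2 * rankIn S i j + 1
  | ypath _ j _ => 7 * j
  | _ => 0

end XVtx

def itemCluster {η μ M : ℕ} (S : Fin μ → Finset (Fin (3 * η))) (i : Fin (3 * η)) :
    Set (XVtx η μ M) :=
  {x | x = .item i ∨ ∃ j t, i ∈ S j ∧ x = .ipath i j t}

def yCluster {η μ M : ℕ} (z : Fin (μ - η)) : Set (XVtx η μ M) :=
  {x | x = .y z ∨ ∃ j t, x = .ypath z j t}

section Graph

variable {η μ M : ℕ} {S : Fin μ → Finset (Fin (3 * η))} {x y : XVtx η μ M}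

theorem xGraph_adj : (xGraph S).Adj x y ↔ x ≠ y ∧ (xRel S x y ∨ xRel S y x) :=
  fromRel_adj _ _ _

theorem depth_le_of_xRel (h : xRel S x y) : x.depth ≤ y.depth + 1 ∧ y.depth ≤ x.depth + 1 := by
  cases x <;> cases y <;> simp only [xRel] at h <;> simp only [XVtx.depth] <;> grind [Fin.isLt]

theorem depth_le_depth_add_one_of_adj (h : (xGraph S).Adj x y) : y.depth ≤ x.depth + 1 := by
  rcases (xGraph_adj.mp h).2 with h | h
  exacts [(depth_le_of_xRel h).2, (depth_le_of_xRel h).1]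

/- A centre of depth `M` with pairwise disjoint legs, one per block, each attached to the rest of
the graph only at its tip. -/
variable (S) in
structure IsSpider (Cl : Set (XVtx η μ M)) : Prop where
  u_not_mem : ∀ j t, XVtx.u j t ∉ Cl
  depth_eq_zero_of_adj : ∀ ⦃x y⦄, (xGraph S).Adj x y → x ∉ Cl → y ∈ Cl → y.depth = 0
  block_eq_of_adj : ∀ ⦃x y⦄, (xGraph S).Adj x y → x ∈ Cl → y ∈ Cl → x.depth < M → y.depth < M →
    x.block = y.block
  eq_of_block_eq : ∀ ⦃x y⦄, x ∈ Cl → y ∈ Cl → x.depth = 0 → y.depth = 0 → x.block = y.block →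
    x = y

theorem isSpider_itemCluster (i : Fin (3 * η)) :
    IsSpider S (itemCluster S i : Set (XVtx η μ M)) where
  u_not_mem j t := by simp [itemCluster]
  depth_eq_zero_of_adj x y h hx hy := by
    rw [xGraph_adj] at h
    cases x <;> cases y <;> grind [xRel, itemCluster, XVtx.depth]
  block_eq_of_adj x y h hx hy hdx hdy := by
    rw [xGraph_adj] at h
    cases x <;> cases y <;> grind [xRel, itemCluster, XVtx.depth, XVtx.block]
  eq_of_block_eq x y hx hy hdx hdy hb := by
    cases x <;> cases y <;> grind [itemCluster, XVtx.depth, XVtx.block, Fin.ext_iff]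

theorem isSpider_yCluster (z : Fin (μ - η)) : IsSpider S (yCluster z : Set (XVtx η μ M)) where
  u_not_mem j t := by simp [yCluster]
  depth_eq_zero_of_adj x y h hx hy := by
    rw [xGraph_adj] at h
    cases x <;> cases y <;> grind [xRel, yCluster, XVtx.depth]
  block_eq_of_adj x y h hx hy hdx hdy := by
    rw [xGraph_adj] at h
    cases x <;> cases y <;> grind [xRel, yCluster, XVtx.depth, XVtx.block]
  eq_of_block_eq x y hx hy hdx hdy hb := by
    cases x <;> cases y <;> grind [yCluster, XVtx.depth, XVtx.block, Fin.ext_iff]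

theorem position_step (h : (xGraph S).Adj x y) (hx : x.depth < M) (hy : y.depth < M) :
    x.position S ≤ y.position S + 1 ∧ y.position S ≤ x.position S + 1 ∨
      ∃ z j t, (x = .ypath z j t ∨ y = .ypath z j t) ∧
        x.position S / 7 = j ∧ y.position S / 7 = j := by
  rw [xGraph_adj] at h
  cases x <;> cases y <;> grind [xRel, XVtx.depth, XVtx.position]

theorem mem_of_adj_ipath {i : Fin (3 * η)} {j : Fin μ} {t : Fin M}
    (h : (xGraph S).Adj x (.ipath i j t)) : i ∈ S j := by
  rw [xGraph_adj] at h
  cases x <;> grind [xRel]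

theorem eq_ipath_of_position_eq (hcard : ∀ j, (S j).card = 3) {i : Fin (3 * η)} {j : Fin μ}
    (hi : i ∈ S j) (h : (xGraph S).Adj x y)
    (hy : y.position S = 7 * j + 2 * rankIn S i j + 1) : ∃ t, y = .ipath i j t := by
  have hr := hcard j ▸ rankIn_lt_card hi
  cases y with
  | ipath i' j' t' =>
    have hi' := mem_of_adj_ipath h
    have hr' := hcard j' ▸ rankIn_lt_card hi'
    simp only [XVtx.position] at hy
    obtain rfl : j' = j := Fin.ext (by omega)
    exact ⟨t', by rw [eq_of_rankIn_eq hi' hi (by omega)]⟩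
  | u | item | y | ypath => simp only [XVtx.position] at hy; omega

end Graph

section Path

variable {η μ M : ℕ} {S : Fin μ → Finset (Fin (3 * η))}

theorem depth_lt_of_mem_support {x₀ x₁ : XVtx η μ M} (p : (xGraph S).Walk x₀ x₁)
    (h₀ : x₀.depth = 0) (hlen : p.length < M) : ∀ x ∈ p.support, x.depth < M := by
  intro x hx
  obtain ⟨k, rfl, hk⟩ := Walk.mem_support_iff_exists_getVert.mp hx
  have := p.apply_getVert_le XVtx.depth (fun _ _ ↦ depth_le_depth_add_one_of_adj) hk
  omega

/- The vertices of `Cl` on `p` form the segment `[a, b]`. It is entered and left at tips, and it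
cannot reach the centre, so it stays on one leg and starts and ends at the same tip. -/
theorem IsSpider.eq_of_mem_support {Cl : Set (XVtx η μ M)} (hC : IsSpider S Cl)
    {j₀ j₁ : Fin μ} {t₀ t₁ : Fin 4} {p : (xGraph S).Walk (.u j₀ t₀) (.u j₁ t₁)} (hp : p.IsPath)
    (hcon : ConsecutiveIn Cl p.support) (hdep : ∀ x ∈ p.support, x.depth < M)
    {x x' : XVtx η μ M} (hx : x ∈ Cl) (hx' : x' ∈ Cl) (h : x ∈ p.support)
    (h' : x' ∈ p.support) : x = x' := by
  classical
  obtain ⟨k, rfl, hk⟩ := Walk.mem_support_iff_exists_getVert.mp h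
  obtain ⟨k', rfl, hk'⟩ := Walk.mem_support_iff_exists_getVert.mp h'
  have hex : ∃ m, p.getVert m ∈ Cl := ⟨k, hx⟩
  set a := Nat.find hex
  set b := Nat.findGreatest (fun m ↦ p.getVert m ∈ Cl) p.length
  have ha : p.getVert a ∈ Cl := Nat.find_spec hex
  have hb : p.getVert b ∈ Cl := Nat.findGreatest_spec (P := fun m ↦ p.getVert m ∈ Cl) hk hx
  have hak : a ≤ k ∧ a ≤ k' := ⟨Nat.find_min' hex hx, Nat.find_min' hex hx'⟩
  have hkb : k ≤ b ∧ k' ≤ b := ⟨Nat.le_findGreatest hk hx, Nat.le_findGreatest hk' hx'⟩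
  have ha0 : a ≠ 0 := fun h0 ↦ hC.u_not_mem j₀ t₀ (by rwa [h0, Walk.getVert_zero] at ha)
  have hbl : b ≠ p.length := fun hl ↦ hC.u_not_mem j₁ t₁ (by rwa [hl, Walk.getVert_length] at hb)
  have hbl' : b ≤ p.length := Nat.findGreatest_le _
  have hda : (p.getVert a).depth = 0 := by
    have hadj := p.adj_getVert_succ (i := a - 1) (by omega)
    rw [Nat.sub_add_cancel (by omega)] at hadj
    exact hC.depth_eq_zero_of_adj hadj (Nat.find_min hex (by omega)) ha
  have hdb : (p.getVert b).depth = 0 :=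
    hC.depth_eq_zero_of_adj (p.adj_getVert_succ (by omega)).symm
      (Nat.findGreatest_is_greatest (Nat.lt_succ_self b) (by omega)) hb
  have hmem : ∀ m, a ≤ m → m ≤ b → p.getVert m ∈ Cl := fun m ham hmb ↦
    hcon.getVert_mem ham hmb hbl' ha hb
  have hblock : ∀ m, a ≤ m → m ≤ b → (p.getVert m).block = (p.getVert a).block := by
    intro m ham hmb
    induction m, ham using Nat.le_induction with
    | base => rfl
    | succ m ham ih =>
      rw [← ih (by omega)]
      exact (hC.block_eq_of_adj (p.adj_getVert_succ (by omega)) (hmem m ham (by omega))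
        (hmem _ (by omega) hmb) (hdep _ (p.getVert_mem_support _))
        (hdep _ (p.getVert_mem_support _))).symm
  have hab : a = b := hp.getVert_injOn (by simp only [Set.mem_ofPred_eq]; omega) hbl'
    (hC.eq_of_block_eq ha hb hda hdb (hblock b (by omega) le_rfl).symm)
  rw [show k = k' by omega]

/- At the first step where the position reaches that of the tip of `i` in `S j`, the path lands
on this tip: only bottom paths skip positions, and they stay inside the window of their block. -/
theorem exists_ipath_mem_support (hcard : ∀ j, (S j).card = 3) {x₀ x₁ : XVtx η μ M}
    (p : (xGraph S).Walk x₀ x₁) (hdep : ∀ x ∈ p.support, x.depth < M)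
    (h₀ : x₀.position S = 0) (h₁ : 7 * μ ≤ x₁.position S + 1) {j : Fin μ}
    (hj : ∀ z t, .ypath z j t ∉ p.support) {i : Fin (3 * η)} (hi : i ∈ S j) :
    ∃ t, .ipath i j t ∈ p.support := by
  have hr := hcard j ▸ rankIn_lt_card hi
  have := j.isLt
  obtain ⟨k, hk, hlt, hle⟩ := exists_apply_lt_le_apply_succ
    (f := fun k ↦ (p.getVert k).position S) (v := 7 * j + 2 * rankIn S i j + 1) (n := p.length)
    (by simp only [Walk.getVert_zero, h₀]; omega) (by simp only [Walk.getVert_length]; omega)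
  have hadj := p.adj_getVert_succ hk
  rcases position_step hadj (hdep _ (p.getVert_mem_support _)) (hdep _ (p.getVert_mem_support _))
    with hstep | ⟨z, j', t, hz, hx, hy⟩
  · obtain ⟨t, ht⟩ := eq_ipath_of_position_eq hcard hi hadj (by omega)
    exact ⟨t, ht ▸ p.getVert_mem_support _⟩
  · obtain rfl : j' = j := Fin.ext (by omega)
    rcases hz with hz | hz <;> exact (hj z t (hz ▸ p.getVert_mem_support _)).elim

end Path

theorem stmt15 (η μ M : ℕ) (hμpos : 0 < μ) (hημ : η ≤ μ)
    (S : Fin μ → Finset (Fin (3 * η)))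
    (hcard : ∀ j, (S j).card = 3)
    (hpath : ∃ p : (xGraph S : SimpleGraph (XVtx η μ M)).Walk
        (XVtx.u ⟨0, hμpos⟩ ⟨0, by omega⟩) (XVtx.u ⟨μ - 1, by omega⟩ ⟨3, by omega⟩),
      p.IsPath ∧ (∀ Cl ∈ xClusters η μ M S, ConsecutiveIn Cl p.support) ∧
      p.length < M) :
    HasExactCover S := by
  obtain ⟨p, hp, hcl, hlen⟩ := hpath
  have hdep := depth_lt_of_mem_support p rfl hlen
  refine hasExactCover_of_visits hημ hcard (fun i j ↦ ∃ t, .ipath i j t ∈ p.support)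
    (fun z j ↦ ∃ t, .ypath z j t ∈ p.support) ?_ ?_ ?_
  · rintro i j j' hi hi' ⟨t, ht⟩ ⟨t', ht'⟩
    have := (isSpider_itemCluster i).eq_of_mem_support hp (hcl _ (Or.inl ⟨i, rfl⟩)) hdep
      (Or.inr ⟨j, t, hi, rfl⟩) (Or.inr ⟨j', t', hi', rfl⟩) ht ht'
    exact (XVtx.ipath.inj this).2.1
  · rintro z j j' ⟨t, ht⟩ ⟨t', ht'⟩
    have := (isSpider_yCluster z).eq_of_mem_support hp (hcl _ (Or.inr (Or.inl ⟨z, rfl⟩))) hdep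
      (Or.inr ⟨j, t, rfl⟩) (Or.inr ⟨j', t', rfl⟩) ht ht'
    exact (XVtx.ypath.inj this).2.1
  · exact fun j hj i hi ↦ exists_ipath_mem_support hcard p hdep rfl
      (by simp only [XVtx.position]; omega) (fun z t h ↦ hj ⟨z, t, h⟩) hi
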